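/- For a nontrivial finite cyclic group G of order n with generator set S, the Sombor index of the generator graph satisfies SO(Γ(G)) = (√2/2)|S|(|S|−1)(n−1) + |S|(n−|S|)√((n−1)² + |S|²). -/

import Mathlib

/-- The generator graph of a group: vertices are group elements, two distinct
vertices are adjacent iff at least one of them generates the group. -/
def genGraph (G : Type*) [Group G] : SimpleGraph G where
  Adj x y := x ≠ y ∧ (Subgroup.zpowers x = ⊤ ∨ Subgroup.zpowers y = ⊤)
  symm := by
    constructor
    intro x y h
    exact ⟨h.1.symm, h.2.symm⟩
  loopless := by
    constructor
    intro x h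
    exact h.1 rfl

noncomputable instance {G : Type*} [Group G] [Fintype G] (x : G) :
    Fintype ((genGraph G).neighborSet x) := Fintype.ofFinite _

-- The set of generators of `G`, as a finset.
open Classical in
noncomputable def gens (G : Type*) [Group G] [Fintype G] : Finset G :=
  Finset.univ.filter fun x => Subgroup.zpowers x = ⊤

-- The Sombor index: the sum over edges `uv` of `√(deg u ^ 2 + deg v ^ 2)`
-- (computed as half the sum over ordered adjacent pairs).
open Classical in
noncomputable def sombor {V : Type*} [Fintype V] (Γ : SimpleGraph V)
    [∀ v, Fintype (Γ.neighborSet v)] : ℝ :=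
  (∑ u : V, ∑ v : V,
    if Γ.Adj u v then Real.sqrt ((Γ.degree u : ℝ) ^ 2 + (Γ.degree v : ℝ) ^ 2) else 0) / 2

theorem stmt17 {G : Type*} [Group G] [Fintype G] [IsCyclic G] [Nontrivial G] :
    sombor (genGraph G) =
      (Real.sqrt 2 / 2) * ((gens G).card : ℝ) * (((gens G).card : ℝ) - 1)
          * ((Fintype.card G : ℝ) - 1)
        + ((gens G).card : ℝ) * ((Fintype.card G : ℝ) - ((gens G).card : ℝ))
          * Real.sqrt (((Fintype.card G : ℝ) - 1) ^ 2 + ((gens G).card : ℝ) ^ 2) := by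
  classical
  have hn2 : 2 ≤ Fintype.card G := Fintype.one_lt_card
  set n := Fintype.card G with hn'
  set k := (gens G).card with hk'
  have hmem : ∀ x : G, x ∈ gens G ↔ Subgroup.zpowers x = ⊤ := by
    intro x; simp [gens]
  have hadj : ∀ x y : G, (genGraph G).Adj x y ↔
      x ≠ y ∧ (Subgroup.zpowers x = ⊤ ∨ Subgroup.zpowers y = ⊤) := fun _ _ => Iff.rfl
  -- k ≥ 1
  obtain ⟨g₀, hg₀⟩ := IsCyclic.exists_generator (α := G)
  have hg₀' : g₀ ∈ gens G := (hmem g₀).2 (by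
    rw [Subgroup.eq_top_iff']; exact hg₀)
  have hk1 : 1 ≤ k := Finset.card_pos.mpr ⟨g₀, hg₀'⟩
  have hkn : k ≤ n := by rw [hk', hn']; exact Finset.card_le_univ _
  -- degrees
  have hdeg_gen : ∀ g ∈ gens G, (genGraph G).degree g = n - 1 := by
    intro g hg
    have hg' := (hmem g).1 hg
    have hns : (genGraph G).neighborFinset g = Finset.univ.erase g := by
      ext y
      simp [SimpleGraph.mem_neighborFinset, hadj, hg', ne_comm]
    rw [SimpleGraph.degree, hns, Finset.card_erase_of_mem (Finset.mem_univ g),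
      Finset.card_univ]
  have hdeg_non : ∀ x ∉ gens G, (genGraph G).degree x = k := by
    intro x hx
    have hx' : Subgroup.zpowers x ≠ ⊤ := fun h => hx ((hmem x).2 h)
    have hns : (genGraph G).neighborFinset x = gens G := by
      ext y
      rw [SimpleGraph.mem_neighborFinset, hadj, hmem]
      constructor
      · rintro ⟨hne, h | h⟩
        · exact absurd h hx'
        · exact h
      · intro h
        refine ⟨?_, Or.inr h⟩
        rintro rfl; exact hx' h
    rw [SimpleGraph.degree, hns]
  -- real versions
  have h1n : 1 ≤ n := by omega
  have hdg : ∀ g ∈ gens G, ((genGraph G).degree g : ℝ) = (n : ℝ) - 1 := by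
    intro g hg; rw [hdeg_gen g hg, Nat.cast_sub h1n, Nat.cast_one]
  have hdn : ∀ x ∉ gens G, ((genGraph G).degree x : ℝ) = (k : ℝ) := by
    intro x hx; rw [hdeg_non x hx]
  set N : ℝ := (n : ℝ) - 1 with hN
  have hN0 : 0 ≤ N := by
    have : (1:ℝ) ≤ (n:ℝ) := by exact_mod_cast h1n
    linarith
  set A : ℝ := Real.sqrt (N ^ 2 + N ^ 2) with hA
  set B : ℝ := Real.sqrt (N ^ 2 + (k : ℝ) ^ 2) with hB
  set F : G → G → ℝ := fun u v =>
    if (genGraph G).Adj u v then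
      Real.sqrt (((genGraph G).degree u : ℝ) ^ 2 + ((genGraph G).degree v : ℝ) ^ 2)
    else 0 with hF
  -- inner sums
  have S1 : ∀ u ∈ gens G, ∑ v : G, F u v = ((k : ℝ) - 1) * A + ((n : ℝ) - (k : ℝ)) * B := by
    intro u hu
    have hu' := (hmem u).1 hu
    rw [← Finset.sum_add_sum_compl (gens G)]
    have e1 : ∑ v ∈ gens G, F u v = ((k : ℝ) - 1) * A := by
      rw [← Finset.add_sum_erase _ _ hu]
      have h0 : F u u = 0 := by simp [hF]
      have h2 : ∑ v ∈ (gens G).erase u, F u v = ∑ v ∈ (gens G).erase u, A := by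
        refine Finset.sum_congr rfl ?_
        intro v hv
        have hvne : v ≠ u := (Finset.mem_erase.1 hv).1
        have hvg : v ∈ gens G := (Finset.mem_erase.1 hv).2
        rw [hF]
        simp only
        rw [if_pos ((hadj u v).2 ⟨fun h => hvne h.symm, Or.inl hu'⟩),
          hdg u hu, hdg v hvg]
      rw [h0, h2, Finset.sum_const, Finset.card_erase_of_mem hu, ← hk',
        nsmul_eq_mul, Nat.cast_sub hk1, Nat.cast_one, zero_add]
    have e2 : ∑ v ∈ (gens G)ᶜ, F u v = ((n : ℝ) - (k : ℝ)) * B := by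
      have h2 : ∑ v ∈ (gens G)ᶜ, F u v = ∑ v ∈ (gens G)ᶜ, B := by
        refine Finset.sum_congr rfl ?_
        intro v hv
        have hv' : v ∉ gens G := Finset.mem_compl.1 hv
        have hvne : u ≠ v := by rintro rfl; exact hv' hu
        rw [hF]
        simp only
        rw [if_pos ((hadj u v).2 ⟨hvne, Or.inl hu'⟩), hdg u hu, hdn v hv']
      rw [h2, Finset.sum_const, Finset.card_compl, ← hn', ← hk',
        nsmul_eq_mul, Nat.cast_sub hkn]
    rw [e1, e2]
  have S2 : ∀ u ∉ gens G, ∑ v : G, F u v = (k : ℝ) * B := by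
    intro u hu
    have hu' : Subgroup.zpowers u ≠ ⊤ := fun h => hu ((hmem u).2 h)
    rw [← Finset.sum_add_sum_compl (gens G)]
    have e1 : ∑ v ∈ gens G, F u v = (k : ℝ) * B := by
      have h2 : ∑ v ∈ gens G, F u v = ∑ v ∈ gens G, B := by
        refine Finset.sum_congr rfl ?_
        intro v hv
        have hvg := (hmem v).1 hv
        have hvne : u ≠ v := by rintro rfl; exact hu' hvg
        rw [hF]
        simp only
        rw [if_pos ((hadj u v).2 ⟨hvne, Or.inr hvg⟩), hdn u hu, hdg v hv,
          add_comm (((k:ℝ)) ^ 2)]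
      rw [h2, Finset.sum_const, ← hk', nsmul_eq_mul]
    have e2 : ∑ v ∈ (gens G)ᶜ, F u v = 0 := by
      refine Finset.sum_eq_zero ?_
      intro v hv
      have hv' : v ∉ gens G := Finset.mem_compl.1 hv
      have hv'' : Subgroup.zpowers v ≠ ⊤ := fun h => hv' ((hmem v).2 h)
      rw [hF]
      simp only
      rw [if_neg]
      rw [hadj]
      rintro ⟨-, h | h⟩
      · exact hu' h
      · exact hv'' h
    rw [e1, e2, add_zero]
  -- total
  have htot : ∑ u : G, ∑ v : G, F u v =
      (k : ℝ) * (((k : ℝ) - 1) * A + ((n : ℝ) - (k : ℝ)) * B)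
        + ((n : ℝ) - (k : ℝ)) * ((k : ℝ) * B) := by
    rw [← Finset.sum_add_sum_compl (gens G)]
    have e1 : ∑ u ∈ gens G, ∑ v : G, F u v =
        (k : ℝ) * (((k : ℝ) - 1) * A + ((n : ℝ) - (k : ℝ)) * B) := by
      rw [Finset.sum_congr rfl S1, Finset.sum_const, ← hk', nsmul_eq_mul]
    have e2 : ∑ u ∈ (gens G)ᶜ, ∑ v : G, F u v = ((n : ℝ) - (k : ℝ)) * ((k : ℝ) * B) := by
      rw [Finset.sum_congr rfl (fun u hu => S2 u (Finset.mem_compl.1 hu)),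
        Finset.sum_const, Finset.card_compl, ← hn', ← hk',
        nsmul_eq_mul, Nat.cast_sub hkn]
    rw [e1, e2]
  have hAval : A = Real.sqrt 2 * N := by
    rw [hA]
    have : N ^ 2 + N ^ 2 = 2 * N ^ 2 := by ring
    rw [this, Real.sqrt_mul (by norm_num), Real.sqrt_sq hN0]
  have : sombor (genGraph G) = (∑ u : G, ∑ v : G, F u v) / 2 := rfl
  rw [this, htot, hAval]
  ring
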